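/- For all positive integers m and n, the maximum nullity of the Hopi rectangle graph HD(m,n) satisfies M(HD(m,n)) ≥ m + n. -/

import Mathlib

/-- `A` is a real symmetric matrix whose off-diagonal nonzero pattern is the
adjacency of `G` (diagonal entries are unconstrained). -/
def CompatMatrix {V : Type*} [Fintype V] (G : SimpleGraph V) (A : Matrix V V ℝ) : Prop :=
  A.IsSymm ∧ ∀ i j : V, i ≠ j → (A i j ≠ 0 ↔ G.Adj i j)

/-- The minimum rank `mr(G)` of a graph. -/
noncomputable def minRank {V : Type*} [Fintype V] (G : SimpleGraph V) : ℕ :=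
  sInf {r | ∃ A : Matrix V V ℝ, CompatMatrix G A ∧ A.rank = r}

/-- The maximum nullity `M(G)` of a graph, where the nullity of an `n × n`
matrix `A` is `n - rank A`. -/
noncomputable def maxNullity {V : Type*} [Fintype V] (G : SimpleGraph V) : ℕ :=
  sSup {k | ∃ A : Matrix V V ℝ, CompatMatrix G A ∧ Fintype.card V - A.rank = k}

/-- The vertex set of the Hopi rectangle graph of order `(m,n)`: the set of
integer lattice points `(i,j)` with `m-1 ≤ i+j ≤ 2n+m-1` and `|i-j| ≤ m`
(realized as a `Finset` by filtering a sufficiently large box). -/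
noncomputable def HDverts (m n : ℕ) : Finset (ℤ × ℤ) :=
  (Finset.Icc (-2 : ℤ) (2*n + 2*m) ×ˢ Finset.Icc (-2 : ℤ) (2*n + 2*m)).filter
    (fun p => (m : ℤ) - 1 ≤ p.1 + p.2 ∧ p.1 + p.2 ≤ 2*n + m - 1 ∧ |p.1 - p.2| ≤ m)

/-- The Hopi rectangle graph `HD(m,n)`: vertices are the points of `HDverts m n`,
and `(i,j)` is adjacent to `(i',j')` iff `|i - i'| + |j - j'| = 1`. -/
def HD (m n : ℕ) : SimpleGraph {p : ℤ × ℤ // p ∈ HDverts m n} where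
  Adj u v := |u.val.1 - v.val.1| + |u.val.2 - v.val.2| = 1
  symm := by
    constructor
    intro u v h
    rw [abs_sub_comm v.val.1 u.val.1, abs_sub_comm v.val.2 u.val.2]
    exact h
  loopless := by constructor; intro u h; simp at h

/-! In the rotated coordinates `s = i + j`, `d = i - j`, the vertices of `HD(m,n)` are the
lattice points with `m - 1 ≤ s ≤ 2n + m - 1` and `|d| ≤ m`. A function on `ℤ × ℤ` supported on
one diagonal (or antidiagonal) and alternating in sign along it is annihilated by the adjacency
operator of the infinite grid: a lattice point is adjacent to either no point or two consecutive
points of the line. The `m` diagonals `d = 2t + 1 - m` and the `n` antidiagonals `s = m + 2k`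
have parity opposite to that of the boundary lines `s = m - 1, 2n + m - 1` and `d = ±m` they
end on, so every grid neighbour of a vertex of `HD(m,n)` that lies on one of them is again a
vertex of `HD(m,n)`. Their `m + n` alternating vectors therefore lie in the kernel of the
adjacency matrix of `HD(m,n)`, and each has a point outside the support of all the others. -/

open Finset Matrix SimpleGraph

theorem compatMatrix_adjMatrix {V : Type*} [Fintype V] (G : SimpleGraph V) [DecidableRel G.Adj] :
    CompatMatrix G (G.adjMatrix ℝ) :=
  ⟨G.isSymm_adjMatrix, fun i j _ => by simp [adjMatrix_apply]⟩

theorem card_sub_rank_le_maxNullity {V : Type*} [Fintype V] {G : SimpleGraph V}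
    {A : Matrix V V ℝ} (hA : CompatMatrix G A) : Fintype.card V - A.rank ≤ maxNullity G :=
  le_csSup ⟨Fintype.card V, by rintro _ ⟨B, -, rfl⟩; exact Nat.sub_le _ _⟩ ⟨A, hA, rfl⟩

theorem Matrix.card_le_card_sub_rank_of_linearIndependent {K V W ι : Type*} [Field K]
    [Fintype V] [Fintype ι] {A : Matrix W V K} {v : ι → V → K}
    (hv : LinearIndependent K v) (hAv : ∀ i, A *ᵥ v i = 0) :
    Fintype.card ι ≤ Fintype.card V - A.rank := by
  have hspan : Submodule.span K (Set.range v) ≤ LinearMap.ker A.mulVecLin :=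
    Submodule.span_le.mpr <| Set.range_subset_iff.mpr hAv
  have hcard := Submodule.finrank_mono hspan
  rw [finrank_span_eq_card hv] at hcard
  have hker := A.mulVecLin.finrank_range_add_finrank_ker
  rw [Module.finrank_fintype_fun_eq_card] at hker
  rw [Matrix.rank]
  omega

theorem linearIndependent_of_forall_exists_apply_ne_zero {K ι X : Type*} [Field K]
    {v : ι → X → K} (h : ∀ i, ∃ x, v i x ≠ 0 ∧ ∀ j ≠ i, v j x = 0) :
    LinearIndependent K v := by
  rw [linearIndependent_iff']
  intro s g hg i hi
  obtain ⟨x, hx, hxj⟩ := h i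
  have hgx := congrFun hg x
  simp only [Finset.sum_apply, Pi.smul_apply, smul_eq_mul, Pi.zero_apply] at hgx
  rw [sum_eq_single i (fun j _ hj => by rw [hxj j hj, mul_zero]) (absurd hi)] at hgx
  exact (mul_eq_zero.mp hgx).resolve_right hx

def gridNbrs (p : ℤ × ℤ) : Finset (ℤ × ℤ) :=
  {(p.1 + 1, p.2), (p.1 - 1, p.2), (p.1, p.2 + 1), (p.1, p.2 - 1)}

theorem mem_gridNbrs {p q : ℤ × ℤ} : q ∈ gridNbrs p ↔ |p.1 - q.1| + |p.2 - q.2| = 1 := by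
  obtain ⟨a, b⟩ := p
  obtain ⟨x, y⟩ := q
  simp only [gridNbrs, mem_insert, mem_singleton, Prod.mk.injEq, Int.abs_eq_natAbs]
  omega

theorem sum_gridNbrs {M : Type*} [AddCommMonoid M] (w : ℤ × ℤ → M) (p : ℤ × ℤ) :
    ∑ q ∈ gridNbrs p, w q =
      w (p.1 + 1, p.2) + w (p.1 - 1, p.2) + w (p.1, p.2 + 1) + w (p.1, p.2 - 1) := by
  rw [gridNbrs, sum_insert, sum_insert, sum_pair, add_assoc, add_assoc] <;>
    simp only [mem_insert, mem_singleton, ne_eq, Prod.mk.injEq, not_or] <;> omega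

theorem sum_filter_adj_eq_sum_gridNbrs {M : Type*} [AddCommMonoid M] {S : Finset (ℤ × ℤ)}
    {w : ℤ × ℤ → M} {p : ℤ × ℤ} (hS : ∀ q ∈ gridNbrs p, w q ≠ 0 → q ∈ S) :
    ∑ q ∈ S with |p.1 - q.1| + |p.2 - q.2| = 1, w q = ∑ q ∈ gridNbrs p, w q := by
  refine sum_subset (fun q hq => mem_gridNbrs.mpr (mem_filter.mp hq).2) fun q hq hqS => ?_
  by_contra hw
  exact hqS (mem_filter.mpr ⟨hS q hq hw, mem_gridNbrs.mp hq⟩)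

theorem neg_one_zpow_add_one_add_self (x : ℤ) : (-1 : ℝ) ^ (x + 1) + (-1) ^ x = 0 := by
  rw [zpow_add_one₀ (by norm_num)]; ring

noncomputable def diagVec (c : ℤ) (p : ℤ × ℤ) : ℝ := if p.1 - p.2 = c then (-1) ^ p.1 else 0

noncomputable def antidiagVec (s : ℤ) (p : ℤ × ℤ) : ℝ := if p.1 + p.2 = s then (-1) ^ p.1 else 0

theorem sum_gridNbrs_diagVec (c : ℤ) (p : ℤ × ℤ) : ∑ q ∈ gridNbrs p, diagVec c q = 0 := by
  have h₁ := neg_one_zpow_add_one_add_self p.1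
  have h₂ := neg_one_zpow_add_one_add_self (p.1 - 1)
  rw [sub_add_cancel] at h₂
  rw [sum_gridNbrs]
  simp only [diagVec]
  split_ifs <;> first | omega | linarith

theorem sum_gridNbrs_antidiagVec (s : ℤ) (p : ℤ × ℤ) :
    ∑ q ∈ gridNbrs p, antidiagVec s q = 0 := by
  have h₁ := neg_one_zpow_add_one_add_self p.1
  have h₂ := neg_one_zpow_add_one_add_self (p.1 - 1)
  rw [sub_add_cancel] at h₂
  rw [sum_gridNbrs]
  simp only [antidiagVec]
  split_ifs <;> first | omega | linarith

noncomputable def hopiNullVec (m n : ℕ) : Fin m ⊕ Fin n → ℤ × ℤ → ℝ :=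
  Sum.elim (fun t => diagVec (2 * t + 1 - m)) (fun k => antidiagVec (m + 2 * k))

theorem mem_HDverts {m n : ℕ} {p : ℤ × ℤ} :
    p ∈ HDverts m n ↔ (m : ℤ) - 1 ≤ p.1 + p.2 ∧ p.1 + p.2 ≤ 2 * n + m - 1 ∧
      p.1 - p.2 ≤ m ∧ -(m : ℤ) ≤ p.1 - p.2 := by
  simp only [HDverts, mem_filter, mem_product, mem_Icc, abs_le]
  omega

theorem mem_HDverts_of_mem_gridNbrs {m n : ℕ} {p q : ℤ × ℤ} (i : Fin m ⊕ Fin n)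
    (hp : p ∈ HDverts m n) (hq : q ∈ gridNbrs p) (hi : hopiNullVec m n i q ≠ 0) :
    q ∈ HDverts m n := by
  rw [mem_gridNbrs, Int.abs_eq_natAbs, Int.abs_eq_natAbs] at hq
  rw [mem_HDverts] at hp ⊢
  rcases i with t | k <;>
    simp only [hopiNullVec, Sum.elim_inl, Sum.elim_inr, diagVec, antidiagVec, ne_eq,
      ite_eq_right_iff, Classical.not_imp] at hi <;> omega

theorem adjMatrix_mulVec_hopiNullVec (m n : ℕ) [DecidableRel (HD m n).Adj]
    (i : Fin m ⊕ Fin n) : (HD m n).adjMatrix ℝ *ᵥ (fun p => hopiNullVec m n i p) = 0 := by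
  funext p
  calc ((HD m n).adjMatrix ℝ *ᵥ fun q => hopiNullVec m n i q) p
      = ∑ q ∈ HDverts m n with |p.val.1 - q.1| + |p.val.2 - q.2| = 1, hopiNullVec m n i q := by
        rw [adjMatrix_mulVec_apply, neighborFinset_eq_filter, sum_filter, sum_filter,
          sum_subtype (HDverts m n) (fun _ => Iff.rfl)]
        exact sum_congr rfl fun q _ => if_congr Iff.rfl rfl rfl
    _ = ∑ q ∈ gridNbrs p, hopiNullVec m n i q :=
        sum_filter_adj_eq_sum_gridNbrs fun q hq hi => mem_HDverts_of_mem_gridNbrs i p.2 hq hi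
    _ = 0 := by
        rcases i with t | k
        exacts [sum_gridNbrs_diagVec _ _, sum_gridNbrs_antidiagVec _ _]

theorem exists_hopiNullVec_ne_zero (m n : ℕ) (i : Fin m ⊕ Fin n) :
    ∃ p ∈ HDverts m n, hopiNullVec m n i p ≠ 0 ∧ ∀ j ≠ i, hopiNullVec m n j p = 0 := by
  rcases i with t | k
  · refine ⟨(t, m - 1 - t), mem_HDverts.mpr (by omega), ?_, ?_⟩
    · rw [hopiNullVec, Sum.elim_inl, diagVec, if_pos (by ring)]
      exact zpow_ne_zero _ (by norm_num)
    · rintro (t' | k) h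
      · simp only [hopiNullVec, Sum.elim_inl, diagVec, ite_eq_right_iff]
        intro h'; exact absurd (Fin.ext (by omega)) (fun e => h (congrArg Sum.inl e))
      · simp only [hopiNullVec, Sum.elim_inr, antidiagVec, ite_eq_right_iff]
        omega
  · refine ⟨(m + k, k), mem_HDverts.mpr (by omega), ?_, ?_⟩
    · rw [hopiNullVec, Sum.elim_inr, antidiagVec, if_pos (by ring)]
      exact zpow_ne_zero _ (by norm_num)
    · rintro (t | k') h
      · simp only [hopiNullVec, Sum.elim_inl, diagVec, ite_eq_right_iff]
        omega
      · simp only [hopiNullVec, Sum.elim_inr, antidiagVec, ite_eq_right_iff]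
        intro h'; exact absurd (Fin.ext (by omega)) (fun e => h (congrArg Sum.inr e))

theorem maxNullity_HD_ge_general (m n : ℕ) :
    m + n ≤ maxNullity (HD m n) := by
  classical
  let v : Fin m ⊕ Fin n → {p // p ∈ HDverts m n} → ℝ := fun i p => hopiNullVec m n i p
  have hv : LinearIndependent ℝ v := linearIndependent_of_forall_exists_apply_ne_zero fun i => by
    obtain ⟨p, hp, hi, hj⟩ := exists_hopiNullVec_ne_zero m n i
    exact ⟨⟨p, hp⟩, hi, hj⟩
  calc m + n = Fintype.card (Fin m ⊕ Fin n) := by simp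
    _ ≤ Fintype.card {p // p ∈ HDverts m n} - ((HD m n).adjMatrix ℝ).rank :=
        card_le_card_sub_rank_of_linearIndependent hv (adjMatrix_mulVec_hopiNullVec m n)
    _ ≤ maxNullity (HD m n) := card_sub_rank_le_maxNullity (compatMatrix_adjMatrix _)

/-- The maximum nullity of `HD(m,n)` is at least `m + n`. -/
theorem maxNullity_HD_ge (m n : ℕ) (hm : 0 < m) (hn : 0 < n) :
    m + n ≤ maxNullity (HD m n) :=
  maxNullity_HD_ge_general m n
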